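/- Negative result for the supremum-based sigmoid loss: Suppose the zero function belongs to H and H is regular for adversarial calibration, i.e., there exist x₀∈X and f,g∈H with inf_{x':‖x₀−x'‖_p≤γ} f(x') > 0 and sup_{x':‖x₀−x'‖_p≤γ} g(x') < 0. Let k>0, let Φ_sig(t)=1−tanh(k·t), and let Φ̃_sig be its supremum-based loss. If f:[0,∞)→[0,∞) is non-decreasing and satisfies, for every distribution D over X×Y and every h∈H, R_{ℓ_γ}(h) − R*_{ℓ_γ,H} ≤ f(R_{Φ̃_sig}(h) − R*_{Φ̃_sig,H}), then f(t) ≥ 1/2 for every t ≥ 0. -/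

import Mathlib

open MeasureTheory Set
open scoped ENNReal

noncomputable section

/-- Conditional `ℓ`-risk of `h` at `x` with conditional probability level `t`. -/
def condRiskT {X : Type*} (ℓ : (X → ℝ) → X → ℝ → ℝ) (h : X → ℝ) (x : X) (t : ℝ) : ℝ :=
  t * ℓ h x 1 + (1 - t) * ℓ h x (-1)

/-- Conditional `ℓ`-risk of `h` at `x`. -/
def condRisk {X : Type*} (ℓ : (X → ℝ) → X → ℝ → ℝ) (η : X → ℝ) (h : X → ℝ) (x : X) : ℝ :=
  condRiskT ℓ h x (η x)

/-- Minimal conditional `ℓ`-risk over the hypothesis set `H` at `x`. -/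
def condRiskStar {X : Type*} (ℓ : (X → ℝ) → X → ℝ → ℝ) (η : X → ℝ) (H : Set (X → ℝ))
    (x : X) : ℝ :=
  sInf ((fun h => condRisk ℓ η h x) '' H)

/-- `ΔC_{ℓ,H}(h,x)`. -/
def deltaC {X : Type*} (ℓ : (X → ℝ) → X → ℝ → ℝ) (η : X → ℝ) (H : Set (X → ℝ))
    (h : X → ℝ) (x : X) : ℝ :=
  condRisk ℓ η h x - condRiskStar ℓ η H x

/-- `ΔC_{ℓ,H}(h,x,t)`. -/
def deltaCT {X : Type*} (ℓ : (X → ℝ) → X → ℝ → ℝ) (H : Set (X → ℝ))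
    (h : X → ℝ) (x : X) (t : ℝ) : ℝ :=
  condRiskT ℓ h x t - sInf ((fun h' => condRiskT ℓ h' x t) '' H)

/-- Generalization error `R_ℓ(h)` with respect to the input-space set `XS`. -/
def genErrS {X : Type*} [MeasurableSpace X] (μ : Measure X) (XS : Set X)
    (ℓ : (X → ℝ) → X → ℝ → ℝ) (η : X → ℝ) (h : X → ℝ) : ℝ :=
  ∫ x in XS, condRisk ℓ η h x ∂μ

/-- Best-in-class error `R*_{ℓ,H}`. -/
def bestErrS {X : Type*} [MeasurableSpace X] (μ : Measure X) (XS : Set X)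
    (ℓ : (X → ℝ) → X → ℝ → ℝ) (η : X → ℝ) (H : Set (X → ℝ)) : ℝ :=
  sInf ((fun h => genErrS μ XS ℓ η h) '' H)

/-- Minimizability gap `M_{ℓ,H}`. -/
def minGapS {X : Type*} [MeasurableSpace X] (μ : Measure X) (XS : Set X)
    (ℓ : (X → ℝ) → X → ℝ → ℝ) (η : X → ℝ) (H : Set (X → ℝ)) : ℝ :=
  bestErrS μ XS ℓ η H - ∫ x in XS, condRiskStar ℓ η H x ∂μ

/-- `ε`-truncation `⟨t⟩_ε = t · 1_{t > ε}`. -/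
def trunc (ε t : ℝ) : ℝ := if ε < t then t else 0

/-- `u_h(x) = inf_{‖x−x'‖ ≤ γ} h(x')`. -/
def uInf {E : Type*} [NormedAddCommGroup E] (γ : ℝ) (h : E → ℝ) (x : E) : ℝ :=
  sInf (h '' {x' | ‖x - x'‖ ≤ γ})

/-- `o_h(x) = sup_{‖x−x'‖ ≤ γ} h(x')`. -/
def oSup {E : Type*} [NormedAddCommGroup E] (γ : ℝ) (h : E → ℝ) (x : E) : ℝ :=
  sSup (h '' {x' | ‖x - x'‖ ≤ γ})

/-- The adversarial zero-one loss `ℓ_γ(h,x,y) = sup_{‖x−x'‖ ≤ γ} 1_{y·h(x') ≤ 0}`. -/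
def lossGamma {E : Type*} [NormedAddCommGroup E] (γ : ℝ) (h : E → ℝ) (x : E) (y : ℝ) : ℝ :=
  sSup ((fun x' => if y * h x' ≤ 0 then (1:ℝ) else 0) '' {x' | ‖x - x'‖ ≤ γ})

/-- The supremum-based loss `Φ̃(h,x,y) = sup_{‖x−x'‖ ≤ γ} Φ(y·h(x'))`. -/
def supLoss {E : Type*} [NormedAddCommGroup E] (γ : ℝ) (Φ : ℝ → ℝ)
    (h : E → ℝ) (x : E) (y : ℝ) : ℝ :=
  sSup ((fun x' => Φ (y * h x')) '' {x' | ‖x - x'‖ ≤ γ})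

/-- `H̄_γ(x) = {h ∈ H : u_h(x) ≤ 0 ≤ o_h(x)}`. -/
def Hbar {E : Type*} [NormedAddCommGroup E] (γ : ℝ) (H : Set (E → ℝ)) (x : E) :
    Set (E → ℝ) :=
  {h ∈ H | uInf γ h x ≤ 0 ∧ 0 ≤ oSup γ h x}

/-- A hypothesis set is symmetric when it is closed under negation. -/
def IsSymmetricHyp {E : Type*} (H : Set (E → ℝ)) : Prop :=
  ∀ h : E → ℝ, h ∈ H ↔ (fun x => -(h x)) ∈ H

end

/-!
Take `μ` the Dirac mass at the point `x₀` of the regularity assumption and `η ≡ 1/2`. The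
sigmoid satisfies `Φ(t) + Φ(-t) = 2 = 2 Φ(0)`, so for every `h` the supremum-based sigmoid
risk is at least `1 = R_{Φ̃}(0)`: the zero hypothesis has zero surrogate excess risk. Its
adversarial zero-one risk is `1`, while the hypothesis `f₀`, positive on the whole ball
around `x₀`, achieves `1/2`. Hence `1/2 ≤ f 0 ≤ f t`.
-/

section SupLoss

variable {E : Type*} [NormedAddCommGroup E] {γ : ℝ} {Φ : ℝ → ℝ}

lemma lossGamma_eq_supLoss :
    lossGamma (E := E) γ = supLoss γ (fun t => if t ≤ 0 then 1 else 0) := rfl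

lemma supLoss_eq_of_forall (hγ : 0 ≤ γ) {h : E → ℝ} {x : E} {y c : ℝ}
    (hc : ∀ x', ‖x - x'‖ ≤ γ → Φ (y * h x') = c) : supLoss γ Φ h x y = c := by
  have hball : {x' | ‖x - x'‖ ≤ γ}.Nonempty := ⟨x, by simpa using hγ⟩
  rw [supLoss, image_congr (s := {x' | ‖x - x'‖ ≤ γ}) (g := fun _ => c) hc, hball.image_const,
    csSup_singleton]

lemma supLoss_const (hγ : 0 ≤ γ) (c : ℝ) (x : E) (y : ℝ) :
    supLoss γ Φ (fun _ => c) x y = Φ (y * c) :=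
  supLoss_eq_of_forall hγ fun _ _ => rfl

lemma le_supLoss (hΦ : BddAbove (range Φ)) {h : E → ℝ} {x x' : E} (hx' : ‖x - x'‖ ≤ γ)
    (y : ℝ) : Φ (y * h x') ≤ supLoss γ Φ h x y :=
  le_csSup (hΦ.mono (image_subset_range _ _ |>.trans (range_comp_subset_range _ Φ)))
    ⟨x', hx', rfl⟩

lemma le_supLoss_add_supLoss_neg (hγ : 0 ≤ γ) (hΦ : BddAbove (range Φ)) {c : ℝ}
    (hc : ∀ t, c ≤ Φ t + Φ (-t)) (h : E → ℝ) (x : E) :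
    c ≤ supLoss γ Φ h x 1 + supLoss γ Φ h x (-1) := by
  have hx : ‖x - x‖ ≤ γ := by simpa using hγ
  have h₁ := le_supLoss hΦ (h := h) hx 1
  have h₂ := le_supLoss hΦ (h := h) hx (-1)
  have := hc (h x)
  simp only [one_mul, neg_one_mul] at h₁ h₂
  linarith

lemma pos_of_uInf_pos {h : E → ℝ} {x x' : E} (hpos : 0 < uInf γ h x) (hx' : ‖x - x'‖ ≤ γ) :
    0 < h x' := by
  have hbdd : BddBelow (h '' {x' | ‖x - x'‖ ≤ γ}) := by
    by_contra hnot
    rw [uInf, Real.sInf_of_not_bddBelow hnot] at hpos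
    exact hpos.false
  exact hpos.trans_le (csInf_le hbdd ⟨x', hx', rfl⟩)

lemma lossGamma_of_uInf_pos (hγ : 0 ≤ γ) {h : E → ℝ} {x : E} (hpos : 0 < uInf γ h x) :
    lossGamma γ h x 1 = 0 ∧ lossGamma γ h x (-1) = 1 := by
  rw [lossGamma_eq_supLoss]
  constructor <;> refine supLoss_eq_of_forall hγ fun x' hx' => ?_
  · simp [(pos_of_uInf_pos hpos hx').not_ge]
  · simp [(pos_of_uInf_pos hpos hx').le]

end SupLoss

section ConditionalRisk

variable {X : Type*} {ℓ : (X → ℝ) → X → ℝ → ℝ} {H : Set (X → ℝ)} {h : X → ℝ} {x : X}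

lemma condRisk_half :
    condRisk ℓ (fun _ => 1 / 2) h x = (ℓ h x 1 + ℓ h x (-1)) / 2 := by
  simp only [condRisk, condRiskT]
  ring

lemma deltaC_eq_of_isLeast {η : X → ℝ} {c : ℝ}
    (hleast : IsLeast ((fun h' => condRisk ℓ η h' x) '' H) c) :
    deltaC ℓ η H h x = condRisk ℓ η h x - c := by
  rw [deltaC, condRiskStar, hleast.csInf_eq]

end ConditionalRisk

section Dirac

variable {X : Type*} [MeasurableSpace X] [MeasurableSingletonClass X] {XS : Set X} {x₀ : X}

lemma genErrS_dirac (hx₀ : x₀ ∈ XS) (ℓ : (X → ℝ) → X → ℝ → ℝ) (η : X → ℝ) (h : X → ℝ) :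
    genErrS (Measure.dirac x₀) XS ℓ η h = condRisk ℓ η h x₀ := by
  classical
  rw [genErrS, setIntegral_dirac, if_pos hx₀]

lemma genErrS_sub_bestErrS_dirac (hx₀ : x₀ ∈ XS) (ℓ : (X → ℝ) → X → ℝ → ℝ) (η : X → ℝ)
    (H : Set (X → ℝ)) (h : X → ℝ) :
    genErrS (Measure.dirac x₀) XS ℓ η h - bestErrS (Measure.dirac x₀) XS ℓ η H
      = deltaC ℓ η H h x₀ := by
  simp only [bestErrS, genErrS_dirac hx₀]
  rfl

end Dirac

lemma sigmoid_add_sigmoid_neg (k t : ℝ) :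
    (1 - Real.tanh (k * t)) + (1 - Real.tanh (k * -t)) = 2 := by
  rw [mul_neg, Real.tanh_neg]
  ring

lemma bddAbove_range_sigmoid (k : ℝ) : BddAbove (range fun t => 1 - Real.tanh (k * t)) :=
  ⟨2, by rintro _ ⟨t, rfl⟩; linarith [Real.neg_one_lt_tanh (k * t)]⟩

section ZeroHypothesis

variable {E : Type*} [NormedAddCommGroup E] {γ : ℝ} {H : Set (E → ℝ)}

lemma deltaC_supLoss_zero_half (hγ : 0 ≤ γ) {Φ : ℝ → ℝ} (hΦ : BddAbove (range Φ))
    (hsymm : ∀ t, 2 * Φ 0 ≤ Φ t + Φ (-t)) (hzero : (fun _ => (0 : ℝ)) ∈ H) (x : E) :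
    deltaC (supLoss γ Φ) (fun _ => 1 / 2) H (fun _ => 0) x = 0 := by
  have hrisk0 : condRisk (supLoss γ Φ) (fun _ => 1 / 2) (fun _ => 0) x = Φ 0 := by
    rw [condRisk_half, supLoss_const hγ, supLoss_const hγ]
    ring_nf
  have hleast : IsLeast ((fun h => condRisk (supLoss γ Φ) (fun _ => 1 / 2) h x) '' H) (Φ 0) := by
    refine ⟨⟨_, hzero, hrisk0⟩, ?_⟩
    rintro _ ⟨h, -, rfl⟩
    have := le_supLoss_add_supLoss_neg hγ hΦ hsymm h x
    simp only [condRisk_half]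
    linarith
  rw [deltaC_eq_of_isLeast hleast, hrisk0, sub_self]

lemma deltaC_lossGamma_zero_half (hγ : 0 ≤ γ) {f₀ : E → ℝ} (hf₀ : f₀ ∈ H) {x : E}
    (hpos : 0 < uInf γ f₀ x) :
    deltaC (lossGamma γ) (fun _ => 1 / 2) H (fun _ => 0) x = 1 / 2 := by
  have hbdd : BddAbove (range fun t : ℝ => if t ≤ 0 then (1 : ℝ) else 0) :=
    ⟨1, by rintro _ ⟨t, rfl⟩; dsimp only; split_ifs <;> norm_num⟩
  have hcover (t : ℝ) : (1 : ℝ) ≤ (if t ≤ 0 then 1 else 0) + (if -t ≤ 0 then 1 else 0) := by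
    split_ifs <;> linarith
  have hleast : IsLeast ((fun h => condRisk (lossGamma γ) (fun _ => 1 / 2) h x) '' H) (1 / 2) := by
    obtain ⟨h₁, h₂⟩ := lossGamma_of_uInf_pos hγ hpos
    refine ⟨⟨f₀, hf₀, by simp only [condRisk_half, h₁, h₂]; norm_num⟩, ?_⟩
    rintro _ ⟨h, -, rfl⟩
    have := le_supLoss_add_supLoss_neg hγ hbdd hcover h x
    simp only [condRisk_half, lossGamma_eq_supLoss]
    linarith
  rw [deltaC_eq_of_isLeast hleast, condRisk_half, lossGamma_eq_supLoss, supLoss_const hγ,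
    supLoss_const hγ]
  norm_num

end ZeroHypothesis

open MeasureTheory Set in
theorem negative_result_sup_sigmoid_general
    {d : ℕ} {p : ℝ≥0∞} [Fact (1 ≤ p)]
    [MeasurableSpace (PiLp p (fun _ : Fin d => ℝ))]
    [BorelSpace (PiLp p (fun _ : Fin d => ℝ))]
    (γ : ℝ) (hγ : 0 < γ)
    (XS : Set (PiLp p (fun _ : Fin d => ℝ)))
    (H : Set (PiLp p (fun _ : Fin d => ℝ) → ℝ))
    (hzero : (fun _ => (0:ℝ)) ∈ H)
    (hregular : ∃ x₀ ∈ XS, ∃ f₀ ∈ H, ∃ g₀ ∈ H, 0 < uInf γ f₀ x₀ ∧ oSup γ g₀ x₀ < 0)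
    (k : ℝ)
    (f : ℝ → ℝ) (hfmono : MonotoneOn f (Ici (0:ℝ)))
    (hbound : ∀ μ : Measure (PiLp p (fun _ : Fin d => ℝ)), IsProbabilityMeasure μ →
      μ XS = 1 →
      ∀ η : PiLp p (fun _ : Fin d => ℝ) → ℝ, Measurable η → (∀ x, η x ∈ Icc (0:ℝ) 1) →
      ∀ h ∈ H,
        genErrS μ XS (lossGamma γ) η h - bestErrS μ XS (lossGamma γ) η H
          ≤ f (genErrS μ XS (supLoss γ (fun t => 1 - Real.tanh (k * t))) η h
              - bestErrS μ XS (supLoss γ (fun t => 1 - Real.tanh (k * t))) η H)) :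
    ∀ t : ℝ, 0 ≤ t → 1/2 ≤ f t := by
  obtain ⟨x₀, hx₀, f₀, hf₀, -, -, hpos, -⟩ := hregular
  have key := hbound (Measure.dirac x₀) inferInstance (Measure.dirac_apply_of_mem hx₀)
    (fun _ => 1 / 2) measurable_const (fun _ => by norm_num) _ hzero
  rw [genErrS_sub_bestErrS_dirac hx₀, genErrS_sub_bestErrS_dirac hx₀,
    deltaC_lossGamma_zero_half hγ.le hf₀ hpos,
    deltaC_supLoss_zero_half hγ.le (bddAbove_range_sigmoid k)
      (fun t => by rw [sigmoid_add_sigmoid_neg]; norm_num) hzero] at key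
  intro t ht
  exact key.trans (hfmono self_mem_Ici ht ht)

open MeasureTheory Set in
/-- **Negative result for the supremum-based sigmoid loss** (Theorem 5, sigmoid case). -/
theorem negative_result_sup_sigmoid
    {d : ℕ} {p : ℝ≥0∞} [Fact (1 ≤ p)]
    [MeasurableSpace (PiLp p (fun _ : Fin d => ℝ))]
    [BorelSpace (PiLp p (fun _ : Fin d => ℝ))]
    (γ : ℝ) (hγ : 0 < γ)
    (XS : Set (PiLp p (fun _ : Fin d => ℝ))) (hXSne : XS.Nonempty)
    (hXSmeas : MeasurableSet XS)
    (H : Set (PiLp p (fun _ : Fin d => ℝ) → ℝ)) (hHne : H.Nonempty)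
    (hHmeas : ∀ h ∈ H, Measurable h)
    (hzero : (fun _ => (0:ℝ)) ∈ H)
    (hregular : ∃ x₀ ∈ XS, ∃ f₀ ∈ H, ∃ g₀ ∈ H, 0 < uInf γ f₀ x₀ ∧ oSup γ g₀ x₀ < 0)
    (k : ℝ) (hk : 0 < k)
    (f : ℝ → ℝ) (hfpos : ∀ t, 0 ≤ t → 0 ≤ f t) (hfmono : MonotoneOn f (Ici (0:ℝ)))
    (hbound : ∀ μ : Measure (PiLp p (fun _ : Fin d => ℝ)), IsProbabilityMeasure μ →
      μ XS = 1 →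
      ∀ η : PiLp p (fun _ : Fin d => ℝ) → ℝ, Measurable η → (∀ x, η x ∈ Icc (0:ℝ) 1) →
      ∀ h ∈ H,
        genErrS μ XS (lossGamma γ) η h - bestErrS μ XS (lossGamma γ) η H
          ≤ f (genErrS μ XS (supLoss γ (fun t => 1 - Real.tanh (k * t))) η h
              - bestErrS μ XS (supLoss γ (fun t => 1 - Real.tanh (k * t))) η H)) :
    ∀ t : ℝ, 0 ≤ t → 1/2 ≤ f t :=
  negative_result_sup_sigmoid_general γ hγ XS H hzero hregular k f hfmono hbound
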